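/- Let σ₀ = (x₀, y₀, z₀) ∈ Rec, let n = g_{r,s}(σ₀), and let y be an integer with y ≥ y₀ and y ≡ y₀ (mod s). Then: (a) A_n(y) is nonempty; (b) A_n(y) is a spaced interval with increment r: whenever x₁, x₂ ∈ A_n(y) and x₁ ≤ x ≤ x₂ with x ≡ x₀ (mod r), also x ∈ A_n(y); (c) every element of A_n(y+s) is less than or equal to some element of A_n(y), i.e. the maximum of A_n(y) does not increase when y is replaced by y+s. -/
import Mathlib


/-- The invariant `g_{r,s}(x,y,z) = s x² − r y² + (r−2) s x + r s y − 2 r s z`. -/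
def rotorG (r s : ℤ) : ℤ × ℤ × ℤ → ℤ
  | (x, y, z) => s * x ^ 2 - r * y ^ 2 + (r - 2) * s * x + r * s * y - 2 * r * s * z

/-- `z_n(x, y) = (s x² − r y² + (r−2) s x + r s y − n)/(2 r s)` as a rational number. -/
def zFun (r s n x y : ℤ) : ℚ :=
  ((s * x ^ 2 - r * y ^ 2 + (r - 2) * s * x + r * s * y - n : ℤ) : ℚ) / ((2 * r * s : ℤ) : ℚ)

/-- `A_n(y) = {x ≤ 0 : x ≡ x₀ (mod r), x ≤ z_n(x, y) ≤ y}`. -/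
def Aset (r s n x₀ y : ℤ) : Set ℤ :=
  {x | x ≤ 0 ∧ x ≡ x₀ [ZMOD r] ∧ (x : ℚ) ≤ zFun r s n x y ∧ zFun r s n x y ≤ (y : ℚ)}

def Pv (r s n y x : ℤ) : ℤ := s*x^2 - r*y^2 + (r-2)*s*x + r*s*y - n - 2*r*s*x
def Qv (r s n y x : ℤ) : ℤ := s*x^2 - r*y^2 + (r-2)*s*x + r*s*y - n - 2*r*s*y

lemma mem_Aset_iff {r s : ℤ} (hr : 0 < r) (hs : 0 < s) (n x₀ y x : ℤ) :
    x ∈ Aset r s n x₀ y ↔ x ≤ 0 ∧ x ≡ x₀ [ZMOD r] ∧ 0 ≤ Pv r s n y x ∧ Qv r s n y x ≤ 0 := by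
  have h2 : (0:ℚ) < ((2*r*s : ℤ) : ℚ) := by
    have : (0:ℤ) < 2*r*s := by positivity
    exact_mod_cast this
  unfold Aset zFun Pv Qv
  simp only [Set.mem_setOf_eq]
  rw [le_div_iff₀ h2, div_le_iff₀ h2, ← Int.cast_mul, ← Int.cast_mul, Int.cast_le, Int.cast_le]
  constructor
  · rintro ⟨a, b, c, d⟩; exact ⟨a, b, by linarith, by linarith⟩
  · rintro ⟨a, b, c, d⟩; exact ⟨a, b, by linarith, by linarith⟩


set_option maxHeartbeats 1000000 in
/-- For a recurrent state `σ₀ = (x₀, y₀, z₀)` with `n = g_{r,s}(σ₀)`, and `y ≥ y₀` with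
`y ≡ y₀ (mod s)`: (a) `A_n(y)` is nonempty; (b) `A_n(y)` is a spaced interval of increment
`r`; (c) the elements of `A_n(y+s)` do not exceed the maximal element of `A_n(y)`. -/
theorem rotor_Aset_spaced_interval (r s : ℤ) (hr : 0 < r) (hs : 0 < s)
    (x₀ y₀ z₀ : ℤ) (hx₀ : x₀ ≤ 0) (hy₀ : 0 ≤ y₀) (hz₀ : x₀ ≤ z₀) (hz₀' : z₀ ≤ y₀)
    (n : ℤ) (hn : n = rotorG r s (x₀, y₀, z₀))
    (y : ℤ) (hy : y₀ ≤ y) (hcong : y ≡ y₀ [ZMOD s]) :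
    (Aset r s n x₀ y).Nonempty ∧
    (∀ x₁ ∈ Aset r s n x₀ y, ∀ x₂ ∈ Aset r s n x₀ y, ∀ x : ℤ,
      x₁ ≤ x → x ≤ x₂ → x ≡ x₀ [ZMOD r] → x ∈ Aset r s n x₀ y) ∧
    (∀ x ∈ Aset r s n x₀ (y + s), ∃ x' ∈ Aset r s n x₀ y, x ≤ x') := by
  have hn' : n = s * x₀ ^ 2 - r * y₀ ^ 2 + (r - 2) * s * x₀ + r * s * y₀ - 2 * r * s * z₀ := by
    simpa [rotorG] using hn
  have hy0 : (0:ℤ) ≤ y := le_trans hy₀ hy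
  have hrs : (0:ℤ) < r * s := mul_pos hr hs
  -- Q at x₀ is ≤ 0
  have hQx0 : Qv r s n y x₀ ≤ 0 := by
    unfold Qv
    nlinarith [mul_nonneg (mul_nonneg hr.le (by linarith : (0:ℤ) ≤ y - y₀)) (by linarith : (0:ℤ) ≤ y + y₀),
      mul_nonneg hrs.le (by linarith : (0:ℤ) ≤ y + y₀ - 2*z₀)]
  -- Q ≤ 0 for all x with x₀ + r ≤ x ≤ 0
  have hQgen : ∀ x : ℤ, x₀ + r ≤ x → x ≤ 0 → Qv r s n y x ≤ 0 := by
    intro x hxl hxu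
    unfold Qv
    nlinarith [mul_nonneg (mul_nonneg hs.le (by linarith : (0:ℤ) ≤ x - x₀ - r)) (by linarith : (0:ℤ) ≤ 2 - x - x₀ - r),
      mul_nonneg hrs.le (by linarith : (0:ℤ) ≤ x - x₀ - r),
      mul_nonneg hrs.le (by linarith : (0:ℤ) ≤ 2 - 2*x),
      mul_nonneg (mul_nonneg hr.le (by linarith : (0:ℤ) ≤ y - y₀)) (by linarith : (0:ℤ) ≤ y + y₀),
      mul_nonneg hrs.le (by linarith : (0:ℤ) ≤ y + y₀ - 2*z₀)]
  -- existence of t with P(x₀ - r t) ≥ 0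
  have hex : ∃ t : ℕ, 0 ≤ Pv r s n y (x₀ - r * t) := by
    refine ⟨(r*y^2 - r*s*y + n).toNat, ?_⟩
    set t : ℤ := ((r*y^2 - r*s*y + n).toNat : ℤ) with ht
    have ht0 : 0 ≤ t := Int.ofNat_nonneg _
    have htb : r*y^2 - r*s*y + n ≤ t := Int.self_le_toNat _
    unfold Pv
    nlinarith [mul_nonneg hs.le (sq_nonneg x₀),
      mul_nonneg (mul_nonneg (mul_nonneg (by linarith : (0:ℤ) ≤ 2*s*r) ht0) ht0) hr.le,
      mul_nonneg (mul_nonneg (by linarith : (0:ℤ) ≤ 2*s*r) ht0) (by linarith : (0:ℤ) ≤ -x₀),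
      mul_nonneg (by nlinarith : (0:ℤ) ≤ (r+2)*s*r - 1) ht0,
      mul_nonneg (by positivity : (0:ℤ) ≤ (r+2)*s) (by linarith : (0:ℤ) ≤ -x₀),
      mul_nonneg (mul_nonneg (by positivity : (0:ℤ) ≤ s*r^2) ht0) ht0]
  set T : ℕ := Nat.find hex with hT
  set xs : ℤ := x₀ - r * T with hxs
  have hPxs : 0 ≤ Pv r s n y xs := Nat.find_spec hex
  have hxsle : xs ≤ x₀ := by
    have : (0:ℤ) ≤ r * T := mul_nonneg hr.le (Int.ofNat_nonneg _)
    omega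
  have hxscong : xs ≡ x₀ [ZMOD r] := Int.modEq_iff_dvd.mpr ⟨T, by ring⟩
  -- Q at xs is ≤ 0
  have hQxs : Qv r s n y xs ≤ 0 := by
    rcases Nat.eq_zero_or_pos T with h0 | hpos
    · rw [hxs, h0]; simpa using hQx0
    · by_contra hq
      push_neg at hq
      have hmin : ¬ 0 ≤ Pv r s n y (x₀ - r * (T-1 : ℕ)) :=
        Nat.find_min hex (by omega)
      have hcast : ((T - 1 : ℕ) : ℤ) = (T : ℤ) - 1 := by
        have : 1 ≤ T := hpos; push_cast [this]; ring
      rw [hcast] at hmin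
      push_neg at hmin
      have hxr : x₀ - r * ((T:ℤ) - 1) = xs + r := by rw [hxs]; ring
      rw [hxr] at hmin
      -- subcase y = 0 impossible here
      have hy1 : 1 ≤ y := by
        by_contra hyle
        push_neg at hyle
        have hyy : y = 0 := le_antisymm (by omega) hy0
        have hy00 : y₀ = 0 := le_antisymm (by omega) hy₀
        have hP0 : 0 ≤ Pv r s n y x₀ := by
          unfold Pv
          rw [hn', hyy, hy00]
          nlinarith [mul_nonneg hrs.le (by linarith : (0:ℤ) ≤ z₀ - x₀)]
        have : T = 0 := by
          rw [hT]
          rw [Nat.find_eq_zero]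
          simpa using hP0
        omega
      unfold Pv Qv at *
      nlinarith [mul_nonneg hrs.le (by linarith : (0:ℤ) ≤ y - 1)]
  have hxs0 : xs ≤ 0 := le_trans hxsle hx₀
  have hxsmem : xs ∈ Aset r s n x₀ y :=
    (mem_Aset_iff hr hs n x₀ y xs).mpr ⟨hxs0, hxscong, hPxs, hQxs⟩
  refine ⟨⟨xs, hxsmem⟩, ?_, ?_⟩
  · -- part (b)
    intro x₁ hx1 x₂ hx2 x hle1 hle2 hc
    rw [mem_Aset_iff hr hs] at hx1 hx2 ⊢
    obtain ⟨h1a, h1b, h1P, h1Q⟩ := hx1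
    obtain ⟨h2a, h2b, h2P, h2Q⟩ := hx2
    have hx0 : x ≤ 0 := le_trans hle2 h2a
    refine ⟨hx0, hc, ?_, ?_⟩
    · unfold Pv at *
      nlinarith [mul_nonneg (mul_nonneg hs.le (by linarith : (0:ℤ) ≤ x₂ - x)) (by linarith : (0:ℤ) ≤ r + 2 - x - x₂)]
    · rcases le_or_gt (x + x₁ + r - 2) 0 with hcase | hcase
      · unfold Qv at *
        nlinarith [mul_nonneg (mul_nonneg hs.le (by linarith : (0:ℤ) ≤ x - x₁)) (by linarith : (0:ℤ) ≤ 2 - x - x₁ - r)]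
      · unfold Qv at *
        nlinarith [mul_nonneg (mul_nonneg hs.le (by linarith : (0:ℤ) ≤ x₂ - x)) (by linarith : (0:ℤ) ≤ x + x₂ + r - 2)]
  · -- part (c)
    intro x hx
    rw [mem_Aset_iff hr hs] at hx
    obtain ⟨hxa, hxb, hxP, hxQ⟩ := hx
    have hPy : 0 ≤ Pv r s n y x := by
      unfold Pv at hxP ⊢
      nlinarith [mul_nonneg hrs.le hy0]
    rcases le_or_gt x x₀ with hcase | hcase
    · -- x ≤ x₀ : then x ≤ xs
      obtain ⟨k, hk⟩ := Int.ModEq.dvd hxb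
      have hk0 : 0 ≤ k := by
        by_contra h
        push_neg at h
        nlinarith
      have hkt : ((k.toNat : ℤ)) = k := Int.toNat_of_nonneg hk0
      have hfind : T ≤ k.toNat := by
        apply Nat.find_le
        have : x₀ - r * (k.toNat : ℤ) = x := by rw [hkt]; omega
        rw [this]; exact hPy
      refine ⟨xs, hxsmem, ?_⟩
      have : r * (T:ℤ) ≤ r * (k.toNat : ℤ) :=
        mul_le_mul_of_nonneg_left (by exact_mod_cast hfind) hr.le
      rw [hkt] at this
      omega
    · -- x₀ < x : x itself is in Aset y
      obtain ⟨m, hm⟩ := Int.ModEq.dvd hxb.symm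
      have hm1 : 1 ≤ m := by
        by_contra h
        push_neg at h
        have : m ≤ 0 := by omega
        nlinarith
      have hxge : x₀ + r ≤ x := by nlinarith
      refine ⟨x, (mem_Aset_iff hr hs n x₀ y x).mpr ⟨hxa, hxb, hPy, hQgen x hxge hxa⟩, le_refl x⟩
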